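/- Let k be a field of characteristic not 2 containing an element i with i² = -1, and let a,b,c ∈ k∖{2,-2}. If κ ∈ k satisfies κ² = (2+a)(2+b)(2+c), then the rational map (x,y) ↦ ((x+1)/(x-1), κ y/(x-1)⁶) maps points of the curve y² = (x⁴+a'x²+1)(x⁴+b'x²+1)(x⁴+c'x²+1) with a' = (12-2a)/(2+a), b' = (12-2b)/(2+b), c' = (12-2c)/(2+c), to points of the curve y² = (x⁴+ax²+1)(x⁴+bx²+1)(x⁴+cx²+1), for all x with x ≠ 1. -/

import Mathlib

/-!
Under `X = (x + 1)/(x - 1)` each quartic factor transforms separately: clearing denominators,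
`(x + 1)⁴ + t (x + 1)²(x - 1)² + (x - 1)⁴ = (2 + t) x⁴ + (12 - 2t) x² + (2 + t)`,
so `X⁴ + t X² + 1 = (2 + t)(x⁴ + t' x² + 1)/(x - 1)⁴` with `t' = (12 - 2t)/(2 + t)`.
Multiplying the three factors, the constants combine to `κ²` and the denominators to `(x - 1)¹²`.
-/

theorem add_one_div_sub_one_quartic {k : Type*} [Field k] {t x : k}
    (ht : 2 + t ≠ 0) (hx : x ≠ 1) :
    ((x + 1) / (x - 1)) ^ 4 + t * ((x + 1) / (x - 1)) ^ 2 + 1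
      = (2 + t) * (x ^ 4 + (12 - 2 * t) / (2 + t) * x ^ 2 + 1) / (x - 1) ^ 4 := by
  have hx' : x - 1 ≠ 0 := sub_ne_zero.mpr hx
  field_simp
  ring

theorem two_add_ne_zero {k : Type*} [Field k] {t : k} (ht : t ≠ -2) : 2 + t ≠ 0 :=
  fun h ↦ ht (by linear_combination h)

theorem stmt5_general (k : Type*) [Field k]
    (a b c : k) (ha : a ≠ 2 ∧ a ≠ -2) (hb : b ≠ 2 ∧ b ≠ -2) (hc : c ≠ 2 ∧ c ≠ -2)
    (κ : k) (hκ : κ ^ 2 = (2 + a) * (2 + b) * (2 + c))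
    (a' b' c' : k)
    (ha' : a' = (12 - 2 * a) / (2 + a)) (hb' : b' = (12 - 2 * b) / (2 + b))
    (hc' : c' = (12 - 2 * c) / (2 + c))
    (x y : k) (hx : x ≠ 1)
    (hxy : y ^ 2 = (x ^ 4 + a' * x ^ 2 + 1) * (x ^ 4 + b' * x ^ 2 + 1)
      * (x ^ 4 + c' * x ^ 2 + 1)) :
    (κ * y / (x - 1) ^ 6) ^ 2
      = (((x + 1) / (x - 1)) ^ 4 + a * ((x + 1) / (x - 1)) ^ 2 + 1)
        * (((x + 1) / (x - 1)) ^ 4 + b * ((x + 1) / (x - 1)) ^ 2 + 1)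
        * (((x + 1) / (x - 1)) ^ 4 + c * ((x + 1) / (x - 1)) ^ 2 + 1) := by
  rw [add_one_div_sub_one_quartic (two_add_ne_zero ha.2) hx,
    add_one_div_sub_one_quartic (two_add_ne_zero hb.2) hx,
    add_one_div_sub_one_quartic (two_add_ne_zero hc.2) hx, ← ha', ← hb', ← hc',
    div_pow, mul_pow, hκ, hxy]
  field_simp

theorem stmt5 (k : Type*) [Field k] (hchar : ringChar k ≠ 2)
    (i : k) (hi : i ^ 2 = -1)
    (a b c : k) (ha : a ≠ 2 ∧ a ≠ -2) (hb : b ≠ 2 ∧ b ≠ -2) (hc : c ≠ 2 ∧ c ≠ -2)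
    (κ : k) (hκ : κ ^ 2 = (2 + a) * (2 + b) * (2 + c))
    (a' b' c' : k)
    (ha' : a' = (12 - 2 * a) / (2 + a)) (hb' : b' = (12 - 2 * b) / (2 + b))
    (hc' : c' = (12 - 2 * c) / (2 + c))
    (x y : k) (hx : x ≠ 1)
    (hxy : y ^ 2 = (x ^ 4 + a' * x ^ 2 + 1) * (x ^ 4 + b' * x ^ 2 + 1)
      * (x ^ 4 + c' * x ^ 2 + 1)) :
    (κ * y / (x - 1) ^ 6) ^ 2
      = (((x + 1) / (x - 1)) ^ 4 + a * ((x + 1) / (x - 1)) ^ 2 + 1)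
        * (((x + 1) / (x - 1)) ^ 4 + b * ((x + 1) / (x - 1)) ^ 2 + 1)
        * (((x + 1) / (x - 1)) ^ 4 + c * ((x + 1) / (x - 1)) ^ 2 + 1) :=
  stmt5_general k a b c ha hb hc κ hκ a' b' c' ha' hb' hc' x y hx hxy
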